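/- Let n ≥ 7 and let t be an integer with 2 ≤ t ≤ ⌊(n−1)/2⌋ − 1, and set M := n − t − 2. Let F be a finite field of arbitrary characteristic, V a finite-dimensional F-vector space, and A_1,…,A_M, B_1,…,B_{t+1}, C subspaces of V. If at least one of the subspaces A_1,…,A_M, B_1,…,B_{t+1}, C is the zero subspace, then inequality (b) holds. -/

import Mathlib

open Finset

variable {F V : Type*} [Field F] [AddCommGroup V] [Module F V]

/-- `eH X` is the dimension of the subspace `X`, as an integer
(the "entropy" `H(X)` of the paper). -/
noncomputable def eH (X : Submodule F V) : ℤ := Module.finrank F X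

/-- Left-hand side of inequality (a):
`H(B_1,…,B_{t+1},A_{t+2},…,A_M) + (t+2)(M−t−1)·H(C)`. -/
noncomputable def lhsA (t M : ℕ) (A B : ℕ → Submodule F V) (C : Submodule F V) : ℤ :=
  eH ((∑ i ∈ Icc 1 (t+1), B i) + ∑ i ∈ Icc (t+2) M, A i)
    + ((t : ℤ) + 2) * ((M : ℤ) - t - 1) * eH C

/-- Right-hand side of inequality (a):
`(M−1)·I(A_1+⋯+A_M ; C) + (t+2)·Σ_{i=t+2}^{M} H(A_i)
 + ((t+2)(M−t)−1)·( H(C | A_1,…,A_M) + Σ_{i=1}^{M} I(Σ_{j≠i} A_j ; C) )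
 + Σ_{i=1}^{t+1} ( H(B_i | A_j : j≠i) + H(B_i | A_i, C)
      + I(A_1+⋯+A_i ; A_{i+1}+⋯+A_{t+1}) + I(A_1+⋯+A_{i−1} ; A_i) )`. -/
noncomputable def rhsA (t M : ℕ) (A B : ℕ → Submodule F V) (C : Submodule F V) : ℤ :=
  ((M : ℤ) - 1) * eH ((∑ i ∈ Icc 1 M, A i) ⊓ C)
  + ((t : ℤ) + 2) * ∑ i ∈ Icc (t+2) M, eH (A i)
  + (((t : ℤ) + 2) * ((M : ℤ) - t) - 1) *
      ((eH (C + ∑ i ∈ Icc 1 M, A i) - eH (∑ i ∈ Icc 1 M, A i))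
        + ∑ i ∈ Icc 1 M, eH ((∑ j ∈ (Icc 1 M).erase i, A j) ⊓ C))
  + ∑ i ∈ Icc 1 (t+1),
      ((eH (B i + ∑ j ∈ (Icc 1 M).erase i, A j) - eH (∑ j ∈ (Icc 1 M).erase i, A j))
        + (eH (B i + (A i + C)) - eH (A i + C))
        + eH ((∑ j ∈ Icc 1 i, A j) ⊓ (∑ j ∈ Icc (i+1) (t+1), A j))
        + eH ((∑ j ∈ Icc 1 (i-1), A j) ⊓ A i))

/-- Inequality (a) of the paper. -/
def IneqA (t M : ℕ) (A B : ℕ → Submodule F V) (C : Submodule F V) : Prop :=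
  lhsA t M A B C ≤ rhsA t M A B C

/-- Left-hand side of inequality (b): `M·H(C)`. -/
noncomputable def lhsB (t M : ℕ) (A B : ℕ → Submodule F V) (C : Submodule F V) : ℤ :=
  (M : ℤ) * eH C

/-- Right-hand side of the `M`-scaled inequality (b):
`H(B_1,…,B_{t+1},A_{t+2},…,A_M)
 + M·( H(C | A_1,…,A_M) + Σ_{i=1}^{M} I(Σ_{j≠i} A_j ; C)
    + Σ_{i=2}^{t+1} I(A_1+⋯+A_{i−1} ; A_i)
    + Σ_{i=1}^{t+1} ( H(C | A_i, B_i) + H(B_i | A_j : j≠i)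
        + I(A_1+⋯+A_i ; A_{i+1}+⋯+A_M) ) )`. -/
noncomputable def rhsB (t M : ℕ) (A B : ℕ → Submodule F V) (C : Submodule F V) : ℤ :=
  eH ((∑ i ∈ Icc 1 (t+1), B i) + ∑ i ∈ Icc (t+2) M, A i)
  + (M : ℤ) *
      ((eH (C + ∑ i ∈ Icc 1 M, A i) - eH (∑ i ∈ Icc 1 M, A i))
        + ∑ i ∈ Icc 1 M, eH ((∑ j ∈ (Icc 1 M).erase i, A j) ⊓ C)
        + ∑ i ∈ Icc 2 (t+1), eH ((∑ j ∈ Icc 1 (i-1), A j) ⊓ A i)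
        + ∑ i ∈ Icc 1 (t+1),
            ((eH (C + (A i + B i)) - eH (A i + B i))
              + (eH (B i + ∑ j ∈ (Icc 1 M).erase i, A j) - eH (∑ j ∈ (Icc 1 M).erase i, A j))
              + eH ((∑ j ∈ Icc 1 i, A j) ⊓ (∑ j ∈ Icc (i+1) M, A j))))

/-- Inequality (b) of the paper (in `M`-scaled form). -/
def IneqB (t M : ℕ) (A B : ℕ → Submodule F V) (C : Submodule F V) : Prop :=
  lhsB t M A B C ≤ rhsB t M A B C

/-!
It suffices to show `H(C) ≤ β`, where `β` is the bracket multiplied by `M` in (b): every term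
of `β`, and `H(B_1,…,B_{t+1},A_{t+2},…,A_M)`, is nonnegative. If `A_i = 0`, then
`Σ_{j≠i} A_j = ΣA` and `H(C) = H(C | ΣA) + I(ΣA ; C)`, two terms of `β`. If `B_k = 0`, then
`H(C) = H(C | A_k, B_k) + I(A_k ; C)`, and `I(A_k ; C) ≤ I(Σ_{j≠i} A_j ; C)` for any `i ≠ k`,
which exists because `M ≥ 2`. If `C = 0` there is nothing to prove.
-/

section Entropy

lemma eH_nonneg (X : Submodule F V) : 0 ≤ eH X := Int.natCast_nonneg _

@[simp] lemma eH_bot : eH (⊥ : Submodule F V) = 0 := by simp [eH]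

variable [FiniteDimensional F V]

lemma eH_mono {X Y : Submodule F V} (h : X ≤ Y) : eH X ≤ eH Y := by
  unfold eH; exact_mod_cast Submodule.finrank_mono h

lemma eH_le_eH_add (X Y : Submodule F V) : eH Y ≤ eH (X + Y) :=
  eH_mono (show Y ≤ X ⊔ Y from le_sup_right)

lemma eH_eq_condEH_add_eH_inf (X Y : Submodule F V) :
    eH X = (eH (X + Y) - eH Y) + eH (Y ⊓ X) := by
  have h := Submodule.finrank_sup_add_finrank_inf_eq X Y
  rw [inf_comm] at h
  simp only [eH, Submodule.add_eq_sup]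
  omega

end Entropy

section InequalityB

variable (t M : ℕ) (A B : ℕ → Submodule F V) (C : Submodule F V)

noncomputable def bracketB : ℤ :=
  (eH (C + ∑ i ∈ Icc 1 M, A i) - eH (∑ i ∈ Icc 1 M, A i))
    + ∑ i ∈ Icc 1 M, eH ((∑ j ∈ (Icc 1 M).erase i, A j) ⊓ C)
    + ∑ i ∈ Icc 2 (t+1), eH ((∑ j ∈ Icc 1 (i-1), A j) ⊓ A i)
    + ∑ i ∈ Icc 1 (t+1),
        ((eH (C + (A i + B i)) - eH (A i + B i))
          + (eH (B i + ∑ j ∈ (Icc 1 M).erase i, A j) - eH (∑ j ∈ (Icc 1 M).erase i, A j))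
          + eH ((∑ j ∈ Icc 1 i, A j) ⊓ (∑ j ∈ Icc (i+1) M, A j)))

lemma rhsB_eq : rhsB t M A B C =
    eH ((∑ i ∈ Icc 1 (t+1), B i) + ∑ i ∈ Icc (t+2) M, A i) + M * bracketB t M A B C :=
  rfl

lemma ineqB_of_eH_le_bracketB (h : eH C ≤ bracketB t M A B C) : IneqB t M A B C := by
  unfold IneqB lhsB
  rw [rhsB_eq]
  linarith [mul_le_mul_of_nonneg_left h (Int.natCast_nonneg M),
    eH_nonneg ((∑ i ∈ Icc 1 (t+1), B i) + ∑ i ∈ Icc (t+2) M, A i)]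

variable [FiniteDimensional F V]

lemma condEH_add_eH_inf_add_condEH_le_bracketB {i k : ℕ} (hi : i ∈ Icc 1 M)
    (hk : k ∈ Icc 1 (t+1)) :
    (eH (C + ∑ j ∈ Icc 1 M, A j) - eH (∑ j ∈ Icc 1 M, A j))
      + eH ((∑ j ∈ (Icc 1 M).erase i, A j) ⊓ C)
      + (eH (C + (A k + B k)) - eH (A k + B k)) ≤ bracketB t M A B C := by
  have hinter : eH ((∑ j ∈ (Icc 1 M).erase i, A j) ⊓ C)
      ≤ ∑ i ∈ Icc 1 M, eH ((∑ j ∈ (Icc 1 M).erase i, A j) ⊓ C) :=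
    single_le_sum (fun _ _ => eH_nonneg _) hi
  have hchain : 0 ≤ ∑ i ∈ Icc 2 (t+1), eH ((∑ j ∈ Icc 1 (i-1), A j) ⊓ A i) :=
    sum_nonneg fun _ _ => eH_nonneg _
  have hterm_nonneg : ∀ i ∈ Icc 1 (t+1), 0 ≤
      (eH (C + (A i + B i)) - eH (A i + B i))
        + (eH (B i + ∑ j ∈ (Icc 1 M).erase i, A j) - eH (∑ j ∈ (Icc 1 M).erase i, A j))
        + eH ((∑ j ∈ Icc 1 i, A j) ⊓ (∑ j ∈ Icc (i+1) M, A j)) := fun i _ => by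
    linarith [eH_le_eH_add C (A i + B i), eH_le_eH_add (B i) (∑ j ∈ (Icc 1 M).erase i, A j),
      eH_nonneg ((∑ j ∈ Icc 1 i, A j) ⊓ (∑ j ∈ Icc (i+1) M, A j))]
  have hterm := single_le_sum hterm_nonneg hk
  unfold bracketB
  linarith [eH_le_eH_add (B k) (∑ j ∈ (Icc 1 M).erase k, A j),
    eH_nonneg ((∑ j ∈ Icc 1 k, A j) ⊓ (∑ j ∈ Icc (k+1) M, A j))]

lemma eH_le_bracketB (hM : 2 ≤ M) (htM : t + 1 ≤ M)
    (hzero : (∃ i ∈ Icc 1 M, A i = ⊥) ∨ (∃ i ∈ Icc 1 (t+1), B i = ⊥) ∨ C = ⊥) :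
    eH C ≤ bracketB t M A B C := by
  have h1t : 1 ∈ Icc 1 (t+1) := by simp
  rcases hzero with ⟨i, hi, hAi⟩ | ⟨k, hk, hBk⟩ | rfl
  · have herase : ∑ j ∈ (Icc 1 M).erase i, A j = ∑ j ∈ Icc 1 M, A j :=
      sum_erase _ (by rw [hAi]; rfl)
    have hle := condEH_add_eH_inf_add_condEH_le_bracketB t M A B C hi h1t
    rw [herase] at hle
    linarith [eH_eq_condEH_add_eH_inf C (∑ j ∈ Icc 1 M, A j), eH_le_eH_add C (A 1 + B 1)]
  · have hkM : k ∈ Icc 1 M := by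
      simp only [mem_Icc] at hk ⊢; omega
    obtain ⟨i, hi, hik⟩ := (Icc 1 M).exists_mem_ne (by rw [Nat.card_Icc]; omega) k
    have hAk : A k ≤ ∑ j ∈ (Icc 1 M).erase i, A j :=
      single_le_sum (fun _ _ => zero_le) (mem_erase.mpr ⟨hik.symm, hkM⟩)
    have hle := condEH_add_eH_inf_add_condEH_le_bracketB t M A B C hi hk
    rw [hBk, ← Submodule.zero_eq_bot, add_zero] at hle
    linarith [eH_eq_condEH_add_eH_inf C (A k), eH_mono (inf_le_inf_right C hAk),
      eH_le_eH_add C (∑ j ∈ Icc 1 M, A j)]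
  · have h1M : 1 ∈ Icc 1 M := mem_Icc.mpr ⟨le_rfl, by omega⟩
    have hle := condEH_add_eH_inf_add_condEH_le_bracketB t M A B ⊥ h1M h1t
    rw [eH_bot]
    linarith [eH_le_eH_add ⊥ (∑ j ∈ Icc 1 M, A j), eH_le_eH_add ⊥ (A 1 + B 1),
      eH_nonneg ((∑ j ∈ (Icc 1 M).erase 1, A j) ⊓ ⊥)]

end InequalityB

theorem ineqB_of_zero_subspace_general (n t M : ℕ) (ht2 : 2 ≤ t)
    (ht : t ≤ (n - 1) / 2 - 1) (hM : M = n - t - 2)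
    (F V : Type*) [Field F] [AddCommGroup V] [Module F V]
    [FiniteDimensional F V]
    (A B : ℕ → Submodule F V) (C : Submodule F V)
    (hzero : (∃ i ∈ Icc 1 M, A i = ⊥) ∨ (∃ i ∈ Icc 1 (t+1), B i = ⊥) ∨ C = ⊥) :
    IneqB t M A B C :=
  ineqB_of_eH_le_bracketB t M A B C <|
    eH_le_bracketB t M A B C (by omega) (by omega) hzero

/-- If one of the subspaces `A_1,…,A_M, B_1,…,B_{t+1}, C` is the zero subspace,
then inequality (b) holds over any finite field, regardless of the
characteristic. -/
theorem ineqB_of_zero_subspace (n t M : ℕ) (hn : 7 ≤ n) (ht2 : 2 ≤ t)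
    (ht : t ≤ (n - 1) / 2 - 1) (hM : M = n - t - 2)
    (F V : Type*) [Field F] [Fintype F] [AddCommGroup V] [Module F V]
    [FiniteDimensional F V]
    (A B : ℕ → Submodule F V) (C : Submodule F V)
    (hzero : (∃ i ∈ Icc 1 M, A i = ⊥) ∨ (∃ i ∈ Icc 1 (t+1), B i = ⊥) ∨ C = ⊥) :
    IneqB t M A B C :=
  ineqB_of_zero_subspace_general n t M ht2 ht hM F V A B C hzero
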